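/- arXiv:1902.11164 — 2 statements merged into one kernel-verified Lean document; each statement's English description precedes it below -/
import Mathlib

section
/- Suppose P(x) = ((⋯(x^2 - c_1)^2 ⋯)^2 - c_k ∈ ℤ[x] splits into linear factors over ℤ, c_k ≠ 0, and j ≥ 5 with j ≤ k. Then ln(c_j) > 2^(j-2). -/
open Polynomial

noncomputable def chain (c : ℕ → ℤ) : ℕ → Polynomial ℤ
  | 0 => X
  | j + 1 => (chain c j) ^ 2 - C (c (j + 1))

def Crumbles (P : Polynomial ℤ) : Prop :=
  ∃ s : Multiset (Polynomial ℤ), (∀ q ∈ s, q.degree = 1) ∧ P = s.prod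

/-- `P` is a product of monic linear factors. -/
def MS (P : Polynomial ℤ) : Prop :=
  ∃ m : Multiset ℤ, P = (m.map fun r => X - C r).prod

lemma chain_natDegree (c : ℕ → ℤ) : ∀ i, (chain c i).natDegree = 2 ^ i := by
  intro i
  induction i with
  | zero => simp [chain]
  | succ n ih =>
    rw [chain, natDegree_sub_C, natDegree_pow, ih]
    ring

lemma chain_monic (c : ℕ → ℤ) : ∀ i, (chain c i).Monic := by
  intro i
  induction i with
  | zero => simpa [chain] using monic_X
  | succ n ih =>
    rw [chain]
    apply Monic.sub_of_left (ih.pow 2)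
    calc (C (c (n+1))).degree ≤ 0 := degree_C_le
    _ < (chain c n ^ 2).degree := by
        rw [← natDegree_pos_iff_degree_pos, natDegree_pow, chain_natDegree]
        positivity

lemma lin_decomp (q : Polynomial ℤ) (hd : q.degree = 1) (hu : IsUnit q.leadingCoeff) :
    ∃ ε r, (ε = 1 ∨ ε = -1) ∧ q = C ε * (X - C r) := by
  have h1 : q = C (q.coeff 1) * X + C (q.coeff 0) := eq_X_add_C_of_degree_le_one hd.le
  have hnd : q.natDegree = 1 := natDegree_eq_of_degree_eq_some hd
  have hlc : q.leadingCoeff = q.coeff 1 := by rw [leadingCoeff, hnd]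
  rw [hlc] at hu
  rcases Int.isUnit_iff.mp hu with h | h
  · exact ⟨1, -q.coeff 0, Or.inl rfl, by rw [h1, h]; simp [C_neg]; try ring⟩
  · exact ⟨-1, q.coeff 0, Or.inr rfl, by rw [h1, h]; simp [C_neg]; try ring⟩

lemma crumbles_monic_MS {P : Polynomial ℤ} (hc : Crumbles P) (hm : P.Monic) : MS P := by
  obtain ⟨s, hdeg, hprod⟩ := hc
  have hu : ∀ q ∈ s, IsUnit q.leadingCoeff := by
    intro q hq
    have : q.leadingCoeff ∣ (s.map leadingCoeff).prod :=
      Multiset.dvd_prod (Multiset.mem_map_of_mem _ hq)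
    rw [← leadingCoeff_multiset_prod, ← hprod, hm.leadingCoeff] at this
    exact isUnit_of_dvd_one this
  -- induction: s.prod = C ε * linear product
  have key : ∀ t : Multiset (Polynomial ℤ), (∀ q ∈ t, q.degree = 1 ∧ IsUnit q.leadingCoeff) →
      ∃ (ε : ℤ) (m : Multiset ℤ), (ε = 1 ∨ ε = -1) ∧
        t.prod = C ε * (m.map fun r => X - C r).prod := by
    intro t
    induction t using Multiset.induction with
    | empty => exact fun _ => ⟨1, 0, Or.inl rfl, by simp⟩
    | cons q t ih =>
      intro h
      obtain ⟨ε, m, hε, hm'⟩ := ih (fun x hx => h x (Multiset.mem_cons_of_mem hx))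
      obtain ⟨ε', r, hε', hq⟩ := lin_decomp q (h q (Multiset.mem_cons_self q t)).1
        (h q (Multiset.mem_cons_self q t)).2
      refine ⟨ε' * ε, r ::ₘ m, ?_, ?_⟩
      · rcases hε with h1 | h1 <;> rcases hε' with h2 | h2 <;> simp [h1, h2]
      · rw [Multiset.prod_cons, hq, hm', Multiset.map_cons, Multiset.prod_cons, C_mul]
        ring
  obtain ⟨ε, m, hε, hP⟩ := key s (fun q hq => ⟨hdeg q hq, hu q hq⟩)
  rw [hprod] at hm ⊢
  have hmon : ((m.map fun r => X - C r).prod).Monic :=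
    monic_multiset_prod_of_monic _ _ (fun r _ => monic_X_sub_C r)
  have : ε = 1 := by
    have := hm
    rw [hP] at this
    have h2 : (C ε * (m.map fun r => X - C r).prod).leadingCoeff = ε := by
      rw [leadingCoeff_mul, hmon.leadingCoeff, leadingCoeff_C, mul_one]
    rw [Monic, h2] at this
    exact this
  rw [hP, this]
  exact ⟨m, by simp⟩

lemma MS_of_dvd : ∀ (m : Multiset ℤ) (Q : Polynomial ℤ), Q.Monic →
    Q ∣ (m.map fun r => X - C r).prod → MS Q := by
  intro m
  induction m using Multiset.induction with
  | empty =>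
    intro Q hm hdvd
    simp only [Multiset.map_zero, Multiset.prod_zero] at hdvd
    have : IsUnit Q := isUnit_of_dvd_one hdvd
    have : Q = 1 := hm.eq_one_of_isUnit this
    exact ⟨0, by simp [this]⟩
  | cons r t ih =>
    intro Q hm hdvd
    rw [Multiset.map_cons, Multiset.prod_cons] at hdvd
    have hprime : Prime (X - C r) := prime_X_sub_C r
    by_cases hr : (X - C r) ∣ Q
    · obtain ⟨Q', hQ'⟩ := hr
      have hQ'm : Q'.Monic := by
        have := hm
        rw [hQ'] at this
        exact (monic_X_sub_C r).of_mul_monic_left this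
      have hdvd' : Q' ∣ (t.map fun r => X - C r).prod := by
        rw [hQ'] at hdvd
        exact (mul_dvd_mul_iff_left hprime.ne_zero).mp hdvd
      obtain ⟨m', hm'⟩ := ih Q' hQ'm hdvd'
      exact ⟨r ::ₘ m', by rw [hQ', hm', Multiset.map_cons, Multiset.prod_cons]⟩
    · -- Q ∣ (X - C r) * T with prime not dividing Q : Q ∣ T
      obtain ⟨S, hS⟩ := hdvd
      have : (X - C r) ∣ Q * S := ⟨_, hS.symm⟩
      rcases hprime.dvd_mul.mp this with h | h
      · exact absurd h hr
      · obtain ⟨S', hS'⟩ := h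
        apply ih Q hm
        refine ⟨S', ?_⟩
        have hcancel : (X - C r) * (t.map fun r => X - C r).prod = (X - C r) * (Q * S') := by
          rw [hS, hS']; ring
        exact mul_left_cancel₀ hprime.ne_zero hcancel

lemma chain_sub_monic (c : ℕ → ℤ) (i : ℕ) (w : ℤ) : (chain c i - C w).Monic := by
  apply Monic.sub_of_left (chain_monic c i)
  calc (C w).degree ≤ 0 := degree_C_le
  _ < (chain c i).degree := by
      rw [← natDegree_pos_iff_degree_pos, chain_natDegree]
      positivity

lemma descend (c : ℕ → ℤ) (i : ℕ) (v : ℤ) (h : MS (chain c (i + 1) - C v)) :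
    ∃ s : ℤ, s ^ 2 = c (i + 1) + v ∧ MS (chain c i - C s) ∧ MS (chain c i - C (-s)) := by
  obtain ⟨m, hP⟩ := h
  set A := chain c i with hA
  have hform : chain c (i+1) - C v = A ^ 2 - C (c (i+1) + v) := by
    rw [chain]; rw [C_add]; ring
  -- m is nonempty
  have hcard : m.card = 2 ^ (i + 1) := by
    have h1 : ((m.map fun r => X - C r).prod).natDegree = m.card := by
      rw [natDegree_multiset_prod_X_sub_C_eq_card]
    rw [← hP, natDegree_sub_C, chain_natDegree] at h1
    omega
  have hm0 : m ≠ 0 := by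
    intro h0
    rw [h0, Multiset.card_zero] at hcard
    exact (Nat.two_pow_pos (i+1)).ne' hcard.symm
  obtain ⟨r, hr⟩ := Multiset.exists_mem_of_ne_zero hm0
  have hdvd : (X - C r) ∣ chain c (i+1) - C v := by
    rw [hP]
    exact Multiset.dvd_prod (Multiset.mem_map_of_mem _ hr)
  have hroot : (chain c (i+1) - C v).IsRoot r := dvd_iff_isRoot.mp hdvd
  set s := A.eval r with hs
  have hsq : s ^ 2 = c (i+1) + v := by
    have := hroot
    rw [hform] at this
    simp only [IsRoot, eval_sub, eval_pow, eval_C] at this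
    rw [hs]
    omega
  have hfact : chain c (i+1) - C v = (A - C s) * (A - C (-s)) := by
    rw [hform, ← hsq, map_pow, C_neg]
    ring
  refine ⟨s, hsq, ?_, ?_⟩
  · apply MS_of_dvd m _ (chain_sub_monic c i s)
    rw [← hP, hfact]
    exact Dvd.intro _ rfl
  · apply MS_of_dvd m _ (chain_sub_monic c i (-s))
    rw [← hP, hfact]
    exact Dvd.intro_left _ rfl

/-- Values reachable at depth `n` below the top level `k`. -/
def Reach (c : ℕ → ℤ) (k : ℕ) : ℕ → ℤ → Prop
  | 0, w => w = 0
  | n + 1, w => ∃ v, Reach c k n v ∧ w ^ 2 = c (k - n) + v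

lemma reach_neg (c : ℕ → ℤ) (k n : ℕ) (w : ℤ) (h : Reach c k n w) : Reach c k n (-w) := by
  cases n with
  | zero => simpa [Reach] using h
  | succ n =>
    obtain ⟨v, hv, hw⟩ := h
    exact ⟨v, hv, by rw [neg_pow]; simpa using hw⟩

lemma reach_MS (c : ℕ → ℤ) (k : ℕ) (hMS : MS (chain c k)) :
    ∀ n, n ≤ k → ∀ w, Reach c k n w → MS (chain c (k - n) - C w) := by
  intro n
  induction n with
  | zero =>
    intro _ w hw
    rw [show w = 0 from hw]
    simpa using hMS
  | succ n ih =>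
    intro hn w hw
    obtain ⟨v, hv, hw2⟩ := hw
    have hkn : k - n = (k - (n+1)) + 1 := by omega
    have hMSv : MS (chain c (k - n) - C v) := ih (by omega) v hv
    rw [hkn] at hMSv
    obtain ⟨s, hs2, hMSs, hMSns⟩ := descend c (k - (n+1)) v hMSv
    have hsq : w ^ 2 = s ^ 2 := by rw [hs2, hw2, ← hkn]
    have : (w - s) * (w + s) = 0 := by ring_nf; nlinarith [hsq]
    rcases mul_eq_zero.mp this with h | h
    · rw [show w = s by linarith]
      exact hMSs
    · rw [show w = -s by linarith]
      exact hMSns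

lemma reach_child (c : ℕ → ℤ) (k : ℕ) (hMS : MS (chain c k)) (n : ℕ) (hn : n + 1 ≤ k)
    (v : ℤ) (hv : Reach c k n v) :
    ∃ s : ℤ, s ^ 2 = c (k - n) + v ∧ Reach c k (n + 1) s := by
  have hMSv := reach_MS c k hMS n (by omega) v hv
  have hkn : k - n = (k - (n+1)) + 1 := by omega
  rw [hkn] at hMSv
  obtain ⟨s, hs2, _, _⟩ := descend c (k - (n+1)) v hMSv
  rw [← hkn] at hs2
  exact ⟨s, hs2, ⟨v, hv, hs2⟩⟩

lemma reach_exists (c : ℕ → ℤ) (k : ℕ) (hMS : MS (chain c k)) :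
    ∀ n, n ≤ k → ∃ w, Reach c k n w := by
  intro n
  induction n with
  | zero => exact fun _ => ⟨0, rfl⟩
  | succ n ih =>
    intro hn
    obtain ⟨v, hv⟩ := ih (by omega)
    obtain ⟨s, _, hs⟩ := reach_child c k hMS n hn v hv
    exact ⟨s, hs⟩

lemma reach_nonzero (c : ℕ → ℤ) (k : ℕ) (hMS : MS (chain c k)) (hck : c k ≠ 0) :
    ∀ n, 1 ≤ n → n ≤ k → ∃ w, Reach c k n w ∧ w ≠ 0 := by
  intro n
  induction n with
  | zero => omega
  | succ n ih =>
    intro _ hnk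
    cases Nat.eq_zero_or_pos n with
    | inl h0 =>
      subst h0
      obtain ⟨s, hs2, hs⟩ := reach_child c k hMS 0 hnk 0 rfl
      refine ⟨s, hs, ?_⟩
      intro h0
      rw [h0] at hs2
      simp at hs2
      exact hck (by omega)
    | inr hpos =>
      obtain ⟨v, hv, hv0⟩ := ih hpos (by omega)
      obtain ⟨s, hs2, hs⟩ := reach_child c k hMS n hnk v hv
      obtain ⟨s', hs'2, hs'⟩ := reach_child c k hMS n hnk (-v) (reach_neg c k n v hv)
      by_cases h : s = 0
      · refine ⟨s', hs', ?_⟩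
        intro h0
        rw [h0] at hs'2
        rw [h] at hs2
        simp at hs2 hs'2
        omega
      · exact ⟨s, hs, h⟩

lemma odd_two_mul_eq_zero {M : ℕ} [NeZero M] (hodd : Odd M) (s : ℤ)
    (h : ((2 * s : ℤ) : ZMod M) = 0) : ((s : ℤ) : ZMod M) = 0 := by
  rw [ZMod.intCast_zmod_eq_zero_iff_dvd] at h ⊢
  have hcop : IsCoprime (M : ℤ) 2 := by
    rw [Int.isCoprime_iff_gcd_eq_one]
    simpa [Int.gcd] using hodd.coprime_two_right
  exact hcop.dvd_of_dvd_mul_left h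

lemma mod_claim (c : ℕ → ℤ) (k : ℕ) (hMS : MS (chain c k)) (M : ℕ) (hodd : Odd M)
    (n : ℕ) (hn : n ≤ k) (hMle : M ≤ 2 ^ (k - n)) :
    ∀ w : ℤ, Reach c k n w → (M : ℤ) ∣ w := by
  classical
  have hM0 : M ≠ 0 := by rintro rfl; simp at hodd
  haveI : NeZero M := ⟨hM0⟩
  set B : ℕ → Finset (ZMod M) :=
    fun n => Finset.univ.filter fun x => ∃ w : ℤ, Reach c k n w ∧ ((w : ℤ) : ZMod M) = x with hB
  have growth : ∀ m : ℕ, m + 1 ≤ k → 2 * (B m).card ≤ (B (m + 1)).card + 1 := by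
    intro m hm
    set cb : ZMod M := ((c (k - m) : ℤ) : ZMod M) with hcb
    have hwit : ∀ x ∈ B m, ∃ s : ℤ, Reach c k (m+1) s ∧ (((s : ℤ) : ZMod M)) ^ 2 = cb + x := by
      intro x hx
      rw [hB, Finset.mem_filter] at hx
      obtain ⟨-, w, hw, hwx⟩ := hx
      obtain ⟨s, hs2, hs⟩ := reach_child c k hMS m hm w hw
      refine ⟨s, hs, ?_⟩
      have := congrArg (fun z : ℤ => ((z : ℤ) : ZMod M)) hs2
      push_cast at this
      rw [← hwx, hcb]
      exact_mod_cast this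
    set h : ZMod M × Bool → ZMod M := fun p =>
      if hx : ∃ s : ℤ, Reach c k (m+1) s ∧ (((s : ℤ) : ZMod M)) ^ 2 = cb + p.1 then
        (if p.2 then ((hx.choose : ℤ) : ZMod M) else -((hx.choose : ℤ) : ZMod M))
      else 0 with hh
    set S : Finset (ZMod M × Bool) := ((B m) ×ˢ ({true, false} : Finset Bool)).erase (-cb, false)
      with hS
    have hmaps : ∀ p ∈ S, h p ∈ B (m + 1) := by
      rintro ⟨x, b⟩ hp
      have hp' : (x, b) ∈ (B m) ×ˢ ({true, false} : Finset Bool) := Finset.mem_of_mem_erase hp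
      rw [Finset.mem_product] at hp'
      have hx := hwit x hp'.1
      rw [hh]
      simp only [dif_pos hx]
      obtain ⟨hreach, -⟩ := hx.choose_spec
      cases b
      · simp only [Bool.false_eq_true, if_false]
        rw [hB]; rw [Finset.mem_filter]
        exact ⟨Finset.mem_univ _, -hx.choose, reach_neg c k (m+1) _ hreach, by push_cast; ring⟩
      · simp only [if_true]
        rw [hB]; rw [Finset.mem_filter]
        exact ⟨Finset.mem_univ _, hx.choose, hreach, rfl⟩
    have hinj : Set.InjOn h S := by
      rintro ⟨x1, b1⟩ hp ⟨x2, b2⟩ hq heq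
      have hp' : (x1, b1) ∈ (B m) ×ˢ ({true, false} : Finset Bool) := Finset.mem_of_mem_erase hp
      have hq' : (x2, b2) ∈ (B m) ×ˢ ({true, false} : Finset Bool) := Finset.mem_of_mem_erase hq
      rw [Finset.mem_product] at hp' hq'
      have hxp := hwit x1 hp'.1
      have hxq := hwit x2 hq'.1
      rw [hh] at heq
      simp only [dif_pos hxp, dif_pos hxq] at heq
      set sp : ZMod M := ((hxp.choose : ℤ) : ZMod M) with hsp
      set sq : ZMod M := ((hxq.choose : ℤ) : ZMod M) with hsq
      have hsp2 : sp ^ 2 = cb + x1 := hxp.choose_spec.2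
      have hsq2 : sq ^ 2 = cb + x2 := hxq.choose_spec.2
      have hsqeq : sp ^ 2 = sq ^ 2 := by
        cases b1 <;> cases b2 <;>
          simp only [if_true, Bool.false_eq_true, if_false] at heq
        · linear_combination (-(sp + sq)) * heq
        · linear_combination (sq - sp) * heq
        · linear_combination (sp - sq) * heq
        · linear_combination (sp + sq) * heq
      have hfst : x1 = x2 := by
        have h' : cb + x1 = cb + x2 := by rw [← hsp2, ← hsq2, hsqeq]
        exact add_left_cancel h'
      subst hfst
      -- now same first component
      have hchoose : hxp.choose = hxq.choose := by
        have : hxp = hxq := Subsingleton.elim _ _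
        rw [this]
      have hspq : sp = sq := by rw [hsp, hsq, hchoose]
      have key : ∀ (hin : ((x1, false) : ZMod M × Bool) ∈ S) (h2 : (2 : ZMod M) * sp = 0), False := by
        intro hin h2
        have h2' : ((2 * hxp.choose : ℤ) : ZMod M) = 0 := by
          have hcast : ((2 * hxp.choose : ℤ) : ZMod M) = 2 * sp := by rw [hsp]; push_cast; ring
          rw [hcast]; exact h2
        have hsp0 : sp = 0 := by rw [hsp]; exact odd_two_mul_eq_zero hodd _ h2'
        have hx0 : x1 = -cb := by
          have h0 : (0 : ZMod M) = cb + x1 := by rw [← hsp2, hsp0]; ring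
          linear_combination -h0
        have hpair : ((x1 : ZMod M), false) = ((-cb : ZMod M), false) := by rw [hx0]
        exact (Finset.ne_of_mem_erase hin) hpair
      cases b1 <;> cases b2 <;>
        simp only [if_true, Bool.false_eq_true, if_false] at heq
      · rfl
      · exact absurd (key hp (by rw [hspq] at heq; linear_combination -heq)) not_false
      · exact absurd (key hq (by rw [hspq] at heq; linear_combination heq)) not_false
      · rfl
    have hcard : S.card ≤ (B (m+1)).card := Finset.card_le_card_of_injOn h hmaps hinj
    have herase := Finset.pred_card_le_card_erase
      (s := (B m) ×ˢ ({true, false} : Finset Bool)) (a := ((-cb : ZMod M), false))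
    have hprod : ((B m) ×ˢ ({true, false} : Finset Bool)).card = 2 * (B m).card := by
      rw [Finset.card_product]
      simp [mul_comm]
    rw [← hS] at herase
    omega
  have iter : ∀ t : ℕ, n + t ≤ k → 2 ≤ (B n).card → 2 ^ t + 1 ≤ (B (n + t)).card := by
    intro t
    induction t with
    | zero => intro _ h2; simpa using h2
    | succ t ih =>
      intro ht h2
      have h1 := ih (by omega) h2
      have h3 := growth (n + t) (by omega)
      have : n + (t + 1) = (n + t) + 1 := by omega
      rw [this]
      have hpow : (2:ℕ) ^ (t+1) = 2 * 2 ^ t := by ring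
      omega
  intro w hw
  by_contra hndvd
  have hx0 : ((w : ℤ) : ZMod M) ≠ 0 := fun h => hndvd ((ZMod.intCast_zmod_eq_zero_iff_dvd w M).mp h)
  have hxmem : ((w : ℤ) : ZMod M) ∈ B n := by
    rw [hB, Finset.mem_filter]; exact ⟨Finset.mem_univ _, w, hw, rfl⟩
  have hxmem' : (((-w : ℤ)) : ZMod M) ∈ B n := by
    rw [hB, Finset.mem_filter]; exact ⟨Finset.mem_univ _, -w, reach_neg c k n w hw, rfl⟩
  have hne : ((w : ℤ) : ZMod M) ≠ (((-w : ℤ)) : ZMod M) := by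
    intro h
    apply hx0
    apply odd_two_mul_eq_zero hodd w
    push_cast
    push_cast at h
    linear_combination h
  have h2 : 2 ≤ (B n).card := Finset.one_lt_card.mpr ⟨_, hxmem, _, hxmem', hne⟩
  have hfin := iter (k - n) (by omega) h2
  have hle : (B (n + (k - n))).card ≤ M := by
    calc (B (n + (k - n))).card ≤ Fintype.card (ZMod M) := Finset.card_le_univ _
    _ = M := ZMod.card M
  omega

lemma even_reach (c : ℕ → ℤ) (k : ℕ) (hMS : MS (chain c k)) (n : ℕ) (h1 : 1 ≤ n)
    (h2 : n + 1 ≤ k) (w : ℤ) (hw : Reach c k n w) : 2 ∣ w := by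
  obtain ⟨a, ha2, -⟩ := reach_child c k hMS n h2 w hw
  obtain ⟨b, hb2, -⟩ := reach_child c k hMS n h2 (-w) (reach_neg c k n w hw)
  rcases Int.even_or_odd a with ⟨x, hx⟩ | ⟨x, hx⟩ <;>
    rcases Int.even_or_odd b with ⟨y, hy⟩ | ⟨y, hy⟩ <;> subst hx hy
  · obtain ⟨u, v, huv⟩ : ∃ u v : ℤ, 2 * w = 4 * u - 4 * v :=
      ⟨x ^ 2, y ^ 2, by linear_combination hb2 - ha2⟩
    omega
  · obtain ⟨u, v, huv⟩ : ∃ u v : ℤ, 4 * u + 4 * v + 4 * y + 1 = 2 * c (k - n) :=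
      ⟨x ^ 2, y ^ 2, by linear_combination ha2 + hb2⟩
    omega
  · obtain ⟨u, v, huv⟩ : ∃ u v : ℤ, 4 * u + 4 * x + 4 * v + 1 = 2 * c (k - n) :=
      ⟨x ^ 2, y ^ 2, by linear_combination ha2 + hb2⟩
    omega
  · obtain ⟨u, v, huv⟩ : ∃ u v : ℤ, 2 * w = 4 * u + 4 * x - 4 * v - 4 * y :=
      ⟨x ^ 2, y ^ 2, by linear_combination hb2 - ha2⟩
    omega

lemma dvd_cj (c : ℕ → ℤ) (k : ℕ) (hMS : MS (chain c k)) (j : ℕ) (hj : 2 ≤ j) (hjk : j ≤ k) :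
    (∀ M : ℕ, Odd M → M ≤ 2 ^ (j - 1) → (M : ℤ) ∣ c j) ∧ 2 ∣ c j := by
  obtain ⟨w, hw⟩ := reach_exists c k hMS (k - j) (by omega)
  obtain ⟨s, hs2, hs⟩ := reach_child c k hMS (k - j) (by omega) w hw
  rw [show k - (k - j) = j by omega] at hs2
  have hcj : c j = s ^ 2 - w := by omega
  constructor
  · intro M hModd hMle
    have hMw : (M : ℤ) ∣ w := mod_claim c k hMS M hModd (k - j) (by omega)
      (by rw [show k - (k - j) = j by omega]; calc M ≤ 2 ^ (j-1) := hMle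
          _ ≤ 2 ^ j := Nat.pow_le_pow_right (by omega) (by omega)) w hw
    have hMs : (M : ℤ) ∣ s := mod_claim c k hMS M hModd (k - j + 1) (by omega)
      (by rw [show k - (k - j + 1) = j - 1 by omega]; exact hMle) s hs
    rw [hcj]
    exact dvd_sub (hMs.pow (by norm_num)) hMw
  · have h2s : 2 ∣ s := even_reach c k hMS (k - j + 1) (by omega) (by omega) s hs
    have h2w : 2 ∣ w := by
      by_cases hlt : j < k
      · exact even_reach c k hMS (k - j) (by omega) (by omega) w hw
      · have hkj : k - j = 0 := by omega
        rw [hkj] at hw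
        rw [show w = 0 from hw]
        exact dvd_zero 2
    rw [hcj]
    exact dvd_sub (by rw [pow_two]; exact h2s.mul_left s) h2w

lemma cj_pos (c : ℕ → ℤ) (k : ℕ) (hMS : MS (chain c k)) (hck : c k ≠ 0) (j : ℕ)
    (hj : 1 ≤ j) (hjk : j ≤ k) : 0 < c j := by
  by_cases hlt : j < k
  · obtain ⟨w, hw, hw0⟩ := reach_nonzero c k hMS hck (k - j) (by omega) (by omega)
    obtain ⟨s, hs2, -⟩ := reach_child c k hMS (k - j) (by omega) w hw
    obtain ⟨s', hs'2, -⟩ := reach_child c k hMS (k - j) (by omega) (-w) (reach_neg c k (k-j) w hw)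
    rw [show k - (k - j) = j by omega] at hs2 hs'2
    obtain ⟨u, v, hu, hv, h1, h2⟩ :
        ∃ u v : ℤ, 0 ≤ u ∧ 0 ≤ v ∧ u = c j + w ∧ v = c j - w :=
      ⟨s ^ 2, s' ^ 2, sq_nonneg s, sq_nonneg s', hs2, by omega⟩
    omega
  · have hjek : j = k := by omega
    rw [hjek]
    obtain ⟨s, hs2, -⟩ := reach_child c k hMS 0 (by omega) 0 rfl
    rw [show k - 0 = k by omega] at hs2
    have hck2 : c k = s ^ 2 := by omega
    rcases lt_or_eq_of_le (sq_nonneg s) with h | h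
    · omega
    · exact absurd (by omega : c k = 0) hck

lemma final_ge6 (cj : ℤ) (j : ℕ) (hj : 6 ≤ j)
    (H1 : ∀ M : ℕ, Odd M → M ≤ 2 ^ (j - 1) → (M : ℤ) ∣ cj)
    (H2 : 2 ∣ cj) (H3 : 0 < cj) :
    Real.log cj > 2 ^ (j - 2) := by
  set D : ℕ := cj.toNat with hD
  have hDint : (D : ℤ) = cj := Int.toNat_of_nonneg H3.le
  have hD0 : D ≠ 0 := by omega
  set m : ℕ := 2 ^ (j - 2) with hm
  set B : ℕ := Nat.centralBinom m with hB
  have hB0 : B ≠ 0 := Nat.centralBinom_ne_zero m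
  have h2m : 2 * m = 2 ^ (j - 1) := by
    rw [hm, ← pow_succ']
    congr 1
    omega
  -- factorization comparison
  have hfac : B.factorization ≤ (D * 2 ^ (j - 2)).factorization := by
    rw [Finsupp.le_def]
    intro p
    by_cases hp : p.Prime
    · have hchoose : B.factorization p ≤ Nat.log p (2 * m) := by
        rw [hB, Nat.centralBinom_eq_two_mul_choose]
        exact Nat.factorization_choose_le_log
      have hmulfac : (D * 2 ^ (j - 2)).factorization p
          = D.factorization p + (2 ^ (j - 2) : ℕ).factorization p := by
        rw [Nat.factorization_mul hD0 (by positivity)]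
        rfl
      by_cases hp2 : p = 2
      · subst hp2
        have hlog : Nat.log 2 (2 * m) = j - 1 := by
          rw [h2m, Nat.log_pow (by norm_num)]
        have hdf : 0 < D.factorization 2 := by
          apply Nat.Prime.factorization_pos_of_dvd Nat.prime_two hD0
          have : (2 : ℤ) ∣ (D : ℤ) := by rw [hDint]; exact H2
          exact_mod_cast this
        have hpow : ((2 : ℕ) ^ (j - 2) : ℕ).factorization 2 = j - 2 := by
          rw [Nat.Prime.factorization_pow Nat.prime_two]
          simp
        rw [hlog] at hchoose
        rw [hmulfac, hpow]
        omega
      · -- p odd prime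
        set a : ℕ := B.factorization p with ha
        have hpodd : Odd p := hp.odd_of_ne_two hp2
        have hModd : Odd (p ^ a) := hpodd.pow
        have hMle : p ^ a ≤ 2 ^ (j - 1) := by
          calc p ^ a ≤ p ^ Nat.log p (2 * m) := Nat.pow_le_pow_right hp.pos hchoose
          _ ≤ 2 * m := Nat.pow_log_le_self p (by positivity)
          _ = 2 ^ (j - 1) := h2m
        have hdvd : (p : ℤ) ^ a ∣ cj := by
          have := H1 (p ^ a) hModd hMle
          exact_mod_cast this
        have hdvdD : p ^ a ∣ D := by
          have : (↑(p ^ a) : ℤ) ∣ (D : ℤ) := by rw [hDint]; exact_mod_cast hdvd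
          exact_mod_cast this
        have : a ≤ D.factorization p :=
          (Nat.Prime.pow_dvd_iff_le_factorization hp hD0).mp hdvdD
        rw [hmulfac]
        omega
    · rw [Nat.factorization_eq_zero_of_not_prime _ hp]
      exact Nat.zero_le _
  have hBdvd : B ∣ D * 2 ^ (j - 2) :=
    (Nat.factorization_le_iff_dvd hB0 (by positivity)).mp hfac
  have hBle : B ≤ D * 2 ^ (j - 2) := Nat.le_of_dvd (by positivity) hBdvd
  have hbin : 4 ^ m < m * B := Nat.four_pow_lt_mul_centralBinom m (by
    rw [hm]; calc 4 = 2^2 := by norm_num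
                _ ≤ 2 ^ (j-2) := Nat.pow_le_pow_right (by norm_num) (by omega))
  -- deduce 2 ^ E < D
  have hE1 : 2 * (j - 2) ≤ 2 * m := by
    rw [hm]
    have : j - 2 ≤ 2 ^ (j - 2) := Nat.le_of_lt Nat.lt_two_pow_self
    omega
  set E : ℕ := 2 * m - 2 * (j - 2) with hEdef
  have hED : 2 ^ E < D := by
    have h1 : 4 ^ m < m * (D * 2 ^ (j - 2)) := lt_of_lt_of_le hbin (Nat.mul_le_mul_left m hBle)
    have h4 : (4 : ℕ) ^ m = 2 ^ E * (2 ^ (j - 2) * 2 ^ (j - 2)) := by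
      rw [← pow_add, ← pow_add]
      rw [show (4 : ℕ) = 2 ^ 2 by norm_num, ← pow_mul]
      congr 1
      omega
    rw [h4] at h1
    rw [hm] at h1
    -- h1 : 2^E * (2^(j-2) * 2^(j-2)) < 2^(j-2) * (D * 2^(j-2))
    have := Nat.lt_of_mul_lt_mul_right (a := 2 ^ (j-2) * 2^(j-2)) (by
      calc 2 ^ E * (2 ^ (j-2) * 2^(j-2)) < 2 ^ (j-2) * (D * 2 ^ (j - 2)) := h1
      _ = D * (2 ^ (j-2) * 2 ^ (j-2)) := by ring)
    exact this
  -- E is big: 3 * 2^(j-2) ≤ 2 * E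
  have haux : 4 * j ≤ 2 ^ (j - 2) + 8 := by
    clear * - hj
    induction j with
    | zero => omega
    | succ n ih =>
      rcases Nat.lt_or_ge n 6 with h | h
      · interval_cases n <;> simp_all <;> omega
      · have := ih (by omega)
        have h1 : n - 2 + 1 = n + 1 - 2 := by omega
        have h2 : (2:ℕ) ^ (n - 2 + 1) = 2 * 2 ^ (n-2) := by ring
        have h3 : (2:ℕ) ^ (n-2) ≥ 8 := by
          calc (8:ℕ) = 2^3 := by norm_num
          _ ≤ 2 ^ (n-2) := Nat.pow_le_pow_right (by norm_num) (by omega)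
        have h4 : (2:ℕ) ^ (n+1-2) = 2 * 2 ^ (n-2) := by rw [← h1]; exact h2
        omega
  have hE2 : 3 * 2 ^ (j - 2) ≤ 2 * E := by
    rw [hEdef, hm]
    omega
  -- final real computation
  have hlog2 : (2:ℝ)/3 < Real.log 2 := by
    have := Real.log_two_gt_d9
    norm_num at this ⊢
    linarith
  have hDR : (2:ℝ) ^ E < (D : ℝ) := by exact_mod_cast hED
  have hcjD : (cj : ℝ) = (D : ℝ) := by exact_mod_cast hDint.symm
  rw [gt_iff_lt, hcjD]
  have hlogpos : (0:ℝ) < Real.log 2 := by linarith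
  have hE2R : (3:ℝ) * 2 ^ (j-2) ≤ 2 * E := by exact_mod_cast hE2
  have hppos : (0:ℝ) < 2 ^ (j-2) := by positivity
  have hkey : (2:ℝ) ^ (j - 2) < E * Real.log 2 := by
    have ha : 3 * (2:ℝ)^(j-2) * Real.log 2 ≤ 2 * E * Real.log 2 := by nlinarith
    have hb : 2 * (2:ℝ)^(j-2) < 3 * (2:ℝ)^(j-2) * Real.log 2 := by nlinarith
    linarith
  calc (2:ℝ) ^ (j - 2) < E * Real.log 2 := hkey
  _ = Real.log (2 ^ E) := (Real.log_pow (n := E) (x := 2)).symm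
  _ < Real.log D := Real.log_lt_log (by positivity) hDR

set_option maxHeartbeats 1000000 in
lemma final_5 (cj : ℤ) (j : ℕ) (hj : j = 5)
    (H1 : ∀ M : ℕ, Odd M → M ≤ 2 ^ (j - 1) → (M : ℤ) ∣ cj)
    (H2 : 2 ∣ cj) (H3 : 0 < cj) :
    Real.log cj > 2 ^ (j - 2) := by
  subst hj
  set D : ℕ := cj.toNat with hD
  have hDint : (D : ℤ) = cj := Int.toNat_of_nonneg H3.le
  have hD0 : D ≠ 0 := by rw [hD]; omega
  have hdvdD : ∀ M : ℕ, Odd M → M ≤ 16 → M ∣ D := by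
    intro M hModd hMle
    have := H1 M hModd (by norm_num; omega)
    have h2 : (M : ℤ) ∣ (D : ℤ) := by rw [hDint]; exact this
    exact_mod_cast h2
  have h2D : 2 ∣ D := by
    have h2 : (2 : ℤ) ∣ (D : ℤ) := by rw [hDint]; exact H2
    exact_mod_cast h2
  have h3 : 3 ∣ D := hdvdD 3 (by decide) (by norm_num)
  have h5 : 5 ∣ D := hdvdD 5 (by decide) (by norm_num)
  have h7 : 7 ∣ D := hdvdD 7 (by decide) (by norm_num)
  have h11 : 11 ∣ D := hdvdD 11 (by decide) (by norm_num)
  have h13 : 13 ∣ D := hdvdD 13 (by decide) (by norm_num)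
  have h6 : 6 ∣ D := (Nat.Coprime.mul_dvd_of_dvd_of_dvd (by norm_num) h2D h3 : 2 * 3 ∣ D)
  have h30 : 30 ∣ D := (Nat.Coprime.mul_dvd_of_dvd_of_dvd (by norm_num) h6 h5 : 6 * 5 ∣ D)
  have h210 : 210 ∣ D := (Nat.Coprime.mul_dvd_of_dvd_of_dvd (by norm_num) h30 h7 : 30 * 7 ∣ D)
  have h2310 : 2310 ∣ D :=
    (Nat.Coprime.mul_dvd_of_dvd_of_dvd (by norm_num) h210 h11 : 210 * 11 ∣ D)
  have h30030 : 30030 ∣ D :=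
    (Nat.Coprime.mul_dvd_of_dvd_of_dvd (by norm_num) h2310 h13 : 2310 * 13 ∣ D)
  have hDge : 30030 ≤ D := Nat.le_of_dvd (Nat.pos_of_ne_zero hD0) h30030
  have hcjD : (cj : ℝ) = (D : ℝ) := by exact_mod_cast hDint.symm
  rw [gt_iff_lt, hcjD]
  have : (2:ℝ) ^ (5 - 2) = 8 := by norm_num
  have hDpos : (0:ℝ) < (D:ℝ) := by exact_mod_cast Nat.pos_of_ne_zero hD0
  rw [this, Real.lt_log_iff_exp_lt hDpos]
  have hexp : Real.exp 8 < 30030 := by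
    have h1 : Real.exp 8 = Real.exp 1 ^ (8:ℕ) := by
      rw [← Real.exp_nat_mul]; norm_num
    rw [h1]
    calc Real.exp 1 ^ (8:ℕ) < 2.7182818286 ^ (8:ℕ) := by
          apply pow_lt_pow_left₀ Real.exp_one_lt_d9 (Real.exp_pos 1).le
          norm_num
    _ < 30030 := by norm_num
  calc Real.exp 8 < 30030 := hexp
  _ ≤ (D:ℝ) := by exact_mod_cast hDge


theorem stmt_6 (k : ℕ) (c : ℕ → ℤ) (hcr : Crumbles (chain c k)) (hck : c k ≠ 0)
    (j : ℕ) (hj : 5 ≤ j) (hjk : j ≤ k) :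
    Real.log (c j) > 2 ^ (j - 2) := by
  have hMS : MS (chain c k) := crumbles_monic_MS hcr (chain_monic c k)
  have hdvd := dvd_cj c k hMS j (by omega) hjk
  have hpos := cj_pos c k hMS hck j (by omega) hjk
  by_cases h6 : 6 ≤ j
  · exact final_ge6 (c j) j h6 hdvd.1 hdvd.2 hpos
  · exact final_5 (c j) j (by omega) hdvd.1 hdvd.2 hpos
end

section
/- Suppose P(x) = ((⋯(x^2 - c_1)^2 ⋯)^2 - c_k ∈ ℤ[x] splits into linear factors over ℤ. Then for every prime p ≡ 3 (mod 4) and every j with 1 ≤ j ≤ k, the p-adic valuation ν_p(c_j) is even. -/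
open Polynomial

/-- A polynomial is a product of monic linear factors. -/
def Lin (P : Polynomial ℤ) : Prop :=
  ∃ r : Multiset ℤ, P = (r.map fun a => X - C a).prod

lemma chain_monic_s10 (c : ℕ → ℤ) : ∀ j, (chain c j).Monic ∧ (chain c j).natDegree = 2 ^ j := by
  intro j
  induction j with
  | zero => exact ⟨monic_X, natDegree_X⟩
  | succ n ih =>
    obtain ⟨hm, hd⟩ := ih
    have hm2 : ((chain c n) ^ 2).Monic := hm.pow 2
    have hd2 : ((chain c n) ^ 2).natDegree = 2 ^ (n + 1) := by
      rw [natDegree_pow, hd]; ring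
    have hdeg : (0 : WithBot ℕ) < ((chain c n) ^ 2).degree := by
      rw [degree_eq_natDegree hm2.ne_zero, hd2]
      exact_mod_cast pow_pos (by norm_num : (0:ℕ) < 2) (n + 1)
    constructor
    · exact hm2.sub_of_left (lt_of_le_of_lt (degree_C_le) hdeg)
    · show ((chain c n) ^ 2 - C (c (n + 1))).natDegree = 2 ^ (n + 1)
      rw [natDegree_sub_C, hd2]

lemma lin_of_crumbles {P : Polynomial ℤ} (h : Crumbles P) (hm : P.Monic) : Lin P := by
  obtain ⟨s, hdeg, rfl⟩ := h
  have hlc : (s.map leadingCoeff).prod = 1 := by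
    rw [← leadingCoeff_multiset_prod]; exact hm
  have hunit : ∀ q ∈ s, IsUnit q.leadingCoeff := by
    intro q hq
    exact isUnit_of_dvd_one (hlc ▸ Multiset.dvd_prod (Multiset.mem_map_of_mem _ hq))
  -- show : ∃ u r, IsUnit u ∧ s.prod = C u * ...
  have key : ∀ s : Multiset (Polynomial ℤ), (∀ q ∈ s, q.degree = 1) →
      (∀ q ∈ s, IsUnit q.leadingCoeff) →
      ∃ (u : ℤ) (r : Multiset ℤ), IsUnit u ∧ s.prod = C u * (r.map fun a => X - C a).prod := by
    intro s
    induction s using Multiset.induction with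
    | empty => intro _ _; exact ⟨1, 0, isUnit_one, by simp⟩
    | cons q t ih =>
      intro h1 h2
      obtain ⟨u, r, hu, hprod⟩ := ih (fun x hx => h1 x (Multiset.mem_cons_of_mem hx))
        (fun x hx => h2 x (Multiset.mem_cons_of_mem hx))
      have hq1 : q.degree = 1 := h1 q (Multiset.mem_cons_self _ _)
      have hqu : IsUnit q.leadingCoeff := h2 q (Multiset.mem_cons_self _ _)
      set a := q.leadingCoeff with ha
      have haa : a * a = 1 := Int.isUnit_mul_self hqu
      obtain ⟨b, hb⟩ : ∃ b, q = C a * X + C b := ⟨q.coeff 0, eq_X_add_C_of_degree_eq_one hq1⟩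
      have hq2 : q = C a * (X - C (-(a * b))) := by
        rw [hb, map_neg, map_mul, sub_neg_eq_add, mul_add, ← mul_assoc, ← map_mul, haa,
          map_one, one_mul]
      refine ⟨a * u, (-(a * b)) ::ₘ r, hqu.mul hu, ?_⟩
      rw [Multiset.prod_cons, hprod, Multiset.map_cons, Multiset.prod_cons, hq2, map_mul]
      ring
  obtain ⟨u, r, hu, hprod⟩ := key s hdeg hunit
  have : u = 1 := by
    have h1 : (s.prod).leadingCoeff = 1 := hm
    rw [hprod, leadingCoeff_mul, leadingCoeff_C] at h1
    rwa [(monic_multiset_prod_of_monic r _ (fun a _ => monic_X_sub_C a)).leadingCoeff, mul_one]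
      at h1
  exact ⟨r, by rw [hprod, this, map_one, one_mul]⟩

lemma lin_of_dvd : ∀ (r : Multiset ℤ) (P : Polynomial ℤ), P.Monic →
    P ∣ (r.map fun a => X - C a).prod → Lin P := by
  intro r
  induction r using Multiset.strongInductionOn with
  | ih r ih =>
    intro P hm hdvd
    by_cases hP : IsUnit P
    · exact ⟨0, by simpa using hm.eq_one_of_isUnit hP⟩
    · obtain ⟨q, hqirr, hqP⟩ := WfDvdMonoid.exists_irreducible_factor hP hm.ne_zero
      have hqprime : Prime q := (UniqueFactorizationMonoid.irreducible_iff_prime).mp hqirr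
      obtain ⟨lb, hlb, hqlb⟩ := hqprime.exists_mem_multiset_dvd (hqP.trans hdvd)
      obtain ⟨a, har, rfl⟩ := Multiset.mem_map.mp hlb
      -- X - C a divides q
      obtain ⟨v, hv⟩ := hqlb
      have hXa : (X - C a) ∣ P := by
        rcases (prime_X_sub_C a).irreducible.isUnit_or_isUnit hv with h | h
        · exact absurd h hqirr.not_isUnit
        · obtain ⟨w, hw⟩ := h
          refine dvd_trans ⟨(w⁻¹ : (Polynomial ℤ)ˣ), ?_⟩ hqP
          rw [hv, ← hw, mul_assoc, ← Units.val_mul, mul_inv_cancel, Units.val_one, mul_one]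
      obtain ⟨P', hP'⟩ := hXa
      have hP'm : P'.Monic := by
        exact (monic_X_sub_C a).of_mul_monic_left (hP' ▸ hm)
      have hP'dvd : P' ∣ ((r.erase a).map fun a => X - C a).prod := by
        have hprod := Multiset.prod_map_erase (f := fun a => X - C a) har
        rw [← hprod, hP'] at hdvd
        exact (mul_dvd_mul_iff_left (X_sub_C_ne_zero a)).mp hdvd
      obtain ⟨t, ht⟩ := ih (r.erase a) (Multiset.erase_lt.mpr har) P' hP'm hP'dvd
      exact ⟨a ::ₘ t, by rw [hP', ht, Multiset.map_cons, Multiset.prod_cons]⟩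

lemma split_step {P : Polynomial ℤ} (hm : P.Monic) (hd : 0 < P.natDegree) (d : ℤ)
    (h : Lin (P ^ 2 - C d)) :
    ∃ m : ℤ, d = m ^ 2 ∧ Lin (P - C m) ∧ Lin (P + C m) := by
  obtain ⟨r, hr⟩ := h
  have hcard : r.card = (P ^ 2 - C d).natDegree := by
    rw [hr, natDegree_multiset_prod_X_sub_C_eq_card]
  have hpos : 0 < r.card := by
    rw [hcard, natDegree_sub_C, natDegree_pow]
    omega
  obtain ⟨a, ha⟩ := Multiset.card_pos_iff_exists_mem.mp hpos
  have hroot : (P ^ 2 - C d).IsRoot a := by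
    rw [hr]
    exact isRoot_of_mem_roots (by rw [roots_multiset_prod_X_sub_C]; exact ha)
  have hda : d = (P.eval a) ^ 2 := by
    have := hroot
    simp only [IsRoot, eval_sub, eval_pow, eval_C, sub_eq_zero] at this
    omega
  refine ⟨P.eval a, hda, ?_, ?_⟩ <;>
  · have hfac : P ^ 2 - C d = (P - C (P.eval a)) * (P + C (P.eval a)) := by
      rw [hda]; push_cast [map_pow]; ring
    have hmm : (P - C (P.eval a)).Monic ∧ (P + C (P.eval a)).Monic := by
      have hdeg : ∀ b : ℤ, (C b).degree < P.degree := fun b =>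
        lt_of_le_of_lt degree_C_le (by
          rw [degree_eq_natDegree hm.ne_zero]; exact_mod_cast hd)
      constructor
      · exact hm.sub_of_left (hdeg _)
      · exact hm.add_of_left (hdeg _)
    first
    | exact lin_of_dvd r _ hmm.1 (by rw [← hr, hfac]; exact Dvd.intro _ rfl)
    | exact lin_of_dvd r _ hmm.2 (by rw [← hr, hfac]; exact Dvd.intro_left _ rfl)

lemma key_lemma (c : ℕ → ℤ) : ∀ (j : ℕ) (m : ℤ),
    Lin (chain c j - C m) → Lin (chain c j + C m) →
    ∀ i, 1 ≤ i → i ≤ j → ∃ a b : ℤ, 2 * c i = a ^ 2 + b ^ 2 := by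
  intro j
  induction j with
  | zero => intro m _ _ i h1 h2; omega
  | succ n ih =>
    intro m hsub hadd i h1 h2
    have e1 : chain c (n + 1) - C m = (chain c n) ^ 2 - C (c (n + 1) + m) := by
      show (chain c n) ^ 2 - C (c (n + 1)) - C m = _
      rw [map_add]; ring
    have e2 : chain c (n + 1) + C m = (chain c n) ^ 2 - C (c (n + 1) - m) := by
      show (chain c n) ^ 2 - C (c (n + 1)) + C m = _
      rw [map_sub]; ring
    obtain ⟨hm, hd⟩ := chain_monic_s10 c n
    have hdpos : 0 < (chain c n).natDegree := by rw [hd]; positivity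
    obtain ⟨A, hA, hAsub, hAadd⟩ := split_step hm hdpos _ (e1 ▸ hsub)
    obtain ⟨B, hB, _, _⟩ := split_step hm hdpos _ (e2 ▸ hadd)
    rcases Nat.lt_or_ge i (n + 1) with hlt | hge
    · exact ih A hAsub hAadd i h1 (by omega)
    · have : i = n + 1 := by omega
      subst this
      exact ⟨A, B, by omega⟩

theorem stmt_10 (k : ℕ) (c : ℕ → ℤ) (hcr : Crumbles (chain c k))
    (p : ℕ) (hp : p.Prime) (hp4 : p % 4 = 3) :
    ∀ j, 1 ≤ j → j ≤ k → Even (padicValInt p (c j)) := by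
  intro j hj1 hjk
  have hlin : Lin (chain c k) := lin_of_crumbles hcr (chain_monic_s10 c k).1
  have h0sub : Lin (chain c k - C 0) := by simpa using hlin
  have h0add : Lin (chain c k + C 0) := by simpa using hlin
  obtain ⟨a, b, hab⟩ := key_lemma c k 0 h0sub h0add j hj1 hjk
  -- number theory part
  set n : ℕ := a.natAbs ^ 2 + b.natAbs ^ 2 with hn
  have h1 : ((a.natAbs : ℤ)) ^ 2 = a ^ 2 := by rw [← Int.abs_eq_natAbs, sq_abs]
  have h2 : ((b.natAbs : ℤ)) ^ 2 = b ^ 2 := by rw [← Int.abs_eq_natAbs, sq_abs]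
  have hcast : (n : ℤ) = 2 * c j := by
    push_cast [hn]
    simp only [sq_abs]
    linarith [hab]
  have heven : Even (padicValNat p n) := by
    by_cases hpn : p ∈ n.primeFactors
    · exact Nat.eq_sq_add_sq_iff.mp ⟨a.natAbs, b.natAbs, rfl⟩ p hpn hp4
    · rw [Nat.mem_primeFactors] at hpn
      by_cases hdv : p ∣ n
      · have hn0 : n = 0 := by
          by_contra hn0
          exact hpn ⟨hp, hdv, hn0⟩
        rw [hn0]; simp
      · rw [padicValNat.eq_zero_of_not_dvd hdv]; exact Even.zero
  rcases eq_or_ne (c j) 0 with hc0 | hc0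
  · rw [hc0]
    simp [padicValInt]
  · have hcpos : 0 ≤ c j := by nlinarith [sq_nonneg a, sq_nonneg b]
    have h3 : ((c j).natAbs : ℤ) = c j := Int.natAbs_of_nonneg hcpos
    have hcnat : n = 2 * (c j).natAbs := by omega
    have hne : (c j).natAbs ≠ 0 := Int.natAbs_ne_zero.mpr hc0
    haveI : Fact p.Prime := ⟨hp⟩
    have hp2 : padicValNat p 2 = 0 := by
      apply padicValNat.eq_zero_of_not_dvd
      intro h
      have := (Nat.prime_dvd_prime_iff_eq hp Nat.prime_two).mp h
      omega
    have : padicValNat p n = padicValInt p (c j) := by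
      rw [hcnat, padicValNat.mul (by omega) hne, hp2, zero_add]
      rfl
    rwa [this] at heven
end
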